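/- Let a₁, a₂, a₃ ∈ (0,1) with a₁ + a₂ < 1, and let A₆ = [[0, 1, 0], [a₁, a₂, 1], [1, 0, a₃]]. Then the symmetric game with payoff matrix A₆ has exactly one symmetric Nash equilibrium x in the standard simplex of ℝ³, and this x has all three coordinates strictly positive. -/

import Mathlib

/-!
The positive vector `w = (1 - a₃ + a₂a₃, 1 - a₁a₃, 1 - a₁ - a₂)` equalizes the three pure payoffs
(`A₆ w` is constant), so its normalization is a completely mixed equilibrium. Conversely, at an
equilibrium no pure strategy earns more than the equilibrium payoff and every strategy in the
support earns exactly that much. Going through the smaller supports, each one leaves an unplayed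
strategy that would be a strictly better reply, so the middle, then the first, then the last
strategy is played. With all three payoffs equal the equilibrium solves a rank-two linear system
whose solutions are the multiples of `w`, and the simplex constraint fixes the multiple.
-/

/-- `x` is a symmetric Nash equilibrium of the symmetric game with payoff matrix `A`:
`x` lies in the standard simplex of `ℝ³` and `xᵀAx ≥ yᵀAx` for all `y` in the simplex. -/
def IsSymNash (A : Matrix (Fin 3) (Fin 3) ℝ) (x : Fin 3 → ℝ) : Prop :=
  (∀ j, 0 ≤ x j) ∧ (∑ j, x j = 1) ∧
    ∀ y : Fin 3 → ℝ, (∀ j, 0 ≤ y j) → (∑ j, y j = 1) →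
      dotProduct y (A.mulVec x) ≤ dotProduct x (A.mulVec x)

open Matrix

namespace IsSymNash

variable {A : Matrix (Fin 3) (Fin 3) ℝ} {x : Fin 3 → ℝ}

theorem mulVec_le (h : IsSymNash A x) (i : Fin 3) : (A *ᵥ x) i ≤ x ⬝ᵥ (A *ᵥ x) := by
  have hpure : (0 : Fin 3 → ℝ) ≤ Pi.single i 1 := Pi.single_nonneg.2 zero_le_one
  simpa using h.2.2 (Pi.single i 1) hpure (by simp)

theorem mulVec_eq_of_pos (h : IsSymNash A x) {i : Fin 3} (hi : 0 < x i) :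
    (A *ᵥ x) i = x ⬝ᵥ (A *ᵥ x) := by
  set v := x ⬝ᵥ (A *ᵥ x)
  have hsum : ∑ j, x j * (v - (A *ᵥ x) j) = 0 := by
    simp only [mul_sub, Finset.sum_sub_distrib, ← Finset.sum_mul, h.2.1]
    simp [v, dotProduct]
  have hterm := (Finset.sum_eq_zero_iff_of_nonneg fun j _ ↦
    mul_nonneg (h.1 j) (sub_nonneg.2 (h.mulVec_le j))).1 hsum i (Finset.mem_univ i)
  linarith [(mul_eq_zero.1 hterm).resolve_left hi.ne']

theorem mulVec_eq_mulVec_of_pos (h : IsSymNash A x) {i j : Fin 3} (hi : 0 < x i) (hj : 0 < x j) :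
    (A *ᵥ x) i = (A *ᵥ x) j :=
  (h.mulVec_eq_of_pos hi).trans (h.mulVec_eq_of_pos hj).symm

end IsSymNash

theorem isSymNash_inv_sum_smul {A : Matrix (Fin 3) (Fin 3) ℝ} {w : Fin 3 → ℝ} {c : ℝ}
    (hw : ∀ j, 0 ≤ w j) (hS : 0 < ∑ j, w j) (hc : A *ᵥ w = fun _ ↦ c) :
    IsSymNash A ((∑ j, w j)⁻¹ • w) := by
  refine ⟨fun j ↦ mul_nonneg (inv_nonneg.2 hS.le) (hw j), ?_, fun y _ hy ↦ le_of_eq ?_⟩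
  · simp [← Finset.mul_sum, hS.ne']
  · simp [mulVec_smul, hc, dotProduct, ← Finset.sum_mul, ← Finset.mul_sum, hy, hS.ne']

theorem eq_inv_sum_smul_of_eq_smul {ι : Type*} [Fintype ι] {y w : ι → ℝ} {t : ℝ} (hy : ∑ j, y j = 1)
    (h : y = t • w) : y = (∑ j, w j)⁻¹ • w := by
  have ht : t * ∑ j, w j = 1 := by simpa [h, Finset.mul_sum] using hy
  rw [h, inv_eq_of_mul_eq_one_left ht]

def A₆ (a₁ a₂ a₃ : ℝ) : Matrix (Fin 3) (Fin 3) ℝ := !![0, 1, 0; a₁, a₂, 1; 1, 0, a₃]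

def A₆.equalizer (a₁ a₂ a₃ : ℝ) : Fin 3 → ℝ := ![1 - a₃ + a₂ * a₃, 1 - a₁ * a₃, 1 - a₁ - a₂]

namespace A₆

variable {a₁ a₂ a₃ : ℝ}

theorem mulVec_eq (y : Fin 3 → ℝ) :
    A₆ a₁ a₂ a₃ *ᵥ y = ![y 1, a₁ * y 0 + a₂ * y 1 + y 2, y 0 + a₃ * y 2] := by
  ext i; fin_cases i <;> simp [A₆, Matrix.mulVec, dotProduct, Fin.sum_univ_three]

theorem mulVec_equalizer : A₆ a₁ a₂ a₃ *ᵥ equalizer a₁ a₂ a₃ = fun _ ↦ 1 - a₁ * a₃ := by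
  ext i; fin_cases i <;> simp [mulVec_eq, equalizer] <;> ring

theorem equalizer_pos (ha₁ : a₁ ∈ Set.Ioo (0:ℝ) 1) (ha₂ : a₂ ∈ Set.Ioo (0:ℝ) 1)
    (ha₃ : a₃ ∈ Set.Ioo (0:ℝ) 1) (hsum : a₁ + a₂ < 1) (j : Fin 3) :
    0 < equalizer a₁ a₂ a₃ j := by
  obtain ⟨ha₁, ha₁'⟩ := ha₁; obtain ⟨ha₂, ha₂'⟩ := ha₂; obtain ⟨ha₃, ha₃'⟩ := ha₃
  fin_cases j <;> simp [equalizer] <;> nlinarith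

theorem eq_smul_equalizer {y : Fin 3 → ℝ} (h₁ : y 1 = a₁ * y 0 + a₂ * y 1 + y 2)
    (h₂ : y 1 = y 0 + a₃ * y 2) (hw : equalizer a₁ a₂ a₃ 2 ≠ 0) :
    y = (y 2 / equalizer a₁ a₂ a₃ 2) • equalizer a₁ a₂ a₃ := by
  simp only [equalizer, Matrix.cons_val] at hw ⊢
  ext i; fin_cases i <;> simp <;> field_simp
  · linear_combination h₁ - (1 - a₂) * h₂
  · linear_combination h₁ - a₁ * h₂

end A₆

theorem IsSymNash.A₆_pos {a₁ a₂ a₃ : ℝ} (ha₁ : 0 < a₁) (ha₂ : 0 ≤ a₂) (ha₃ : a₃ < 1)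
    (hsum : a₁ + a₂ < 1) {y : Fin 3 → ℝ} (hy : IsSymNash (A₆ a₁ a₂ a₃) y) (j : Fin 3) :
    0 < y j := by
  have best (i) := hy.mulVec_le i
  have supp (i) (hi : 0 < y i) := hy.mulVec_eq_of_pos hi
  generalize y ⬝ᵥ (A₆ a₁ a₂ a₃ *ᵥ y) = v at best supp
  have le₀ : y 1 ≤ v := by simpa [A₆.mulVec_eq] using best 0
  have le₁ : a₁ * y 0 + a₂ * y 1 + y 2 ≤ v := by simpa [A₆.mulVec_eq] using best 1
  have le₂ : y 0 + a₃ * y 2 ≤ v := by simpa [A₆.mulVec_eq] using best 2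
  have eq₀ (h : 0 < y 0) : y 1 = v := by simpa [A₆.mulVec_eq] using supp 0 h
  have eq₁ (h : 0 < y 1) : a₁ * y 0 + a₂ * y 1 + y 2 = v := by simpa [A₆.mulVec_eq] using supp 1 h
  have eq₂ (h : 0 < y 2) : y 0 + a₃ * y 2 = v := by simpa [A₆.mulVec_eq] using supp 2 h
  have hy₀ := hy.1 0; have hy₁ := hy.1 1; have hy₂ := hy.1 2
  have hsum₁ : y 0 + y 1 + y 2 = 1 := by simpa [Fin.sum_univ_three] using hy.2.1
  have pos₁ : 0 < y 1 := by
    by_contra! h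
    have h₁ : y 1 = 0 := le_antisymm h hy₁
    rcases hy₀.lt_or_eq with h₀ | h₀
    · rw [h₁] at le₁ eq₀
      linarith [eq₀ h₀, mul_pos ha₁ h₀]
    · have h₂ : y 2 = 1 := by linarith
      rw [← h₀, h₁, h₂] at le₁
      rw [← h₀, h₂] at eq₂
      linarith [eq₂ one_pos]
  have pos₀ : 0 < y 0 := by
    by_contra! h
    have h₀ : y 0 = 0 := le_antisymm h hy₀
    rw [h₀] at eq₁ eq₂
    have pos₂ : 0 < y 2 := by
      linarith [eq₁ pos₁, mul_pos (sub_pos.2 (by linarith : a₂ < 1)) pos₁]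
    linarith [eq₁ pos₁, eq₂ pos₂, mul_nonneg ha₂ pos₁.le, mul_pos (sub_pos.2 ha₃) pos₂]
  have pos₂ : 0 < y 2 := by
    by_contra! h
    have h₂ : y 2 = 0 := le_antisymm h hy₂
    rw [h₂] at eq₁ le₂
    have h₀₁ : y 0 ≤ y 1 := by linarith [eq₀ pos₀]
    linarith [eq₀ pos₀, eq₁ pos₁, mul_pos (sub_pos.2 hsum) pos₁,
      mul_le_mul_of_nonneg_left h₀₁ ha₁.le]
  fin_cases j <;> assumption

/-- The symmetric game with the given payoff matrix has exactly one symmetric Nash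
equilibrium, and it is completely mixed. -/
theorem classA6_unique_completely_mixed (a₁ a₂ a₃ : ℝ)
    (h₁ : a₁ ∈ Set.Ioo (0:ℝ) 1) (h₂ : a₂ ∈ Set.Ioo (0:ℝ) 1) (h₃ : a₃ ∈ Set.Ioo (0:ℝ) 1)
    (hsum : a₁ + a₂ < 1) :
    ∃ x : Fin 3 → ℝ, IsSymNash !![0, 1, 0; a₁, a₂, 1; 1, 0, a₃] x ∧ (∀ j, 0 < x j) ∧
      ∀ y : Fin 3 → ℝ, IsSymNash !![0, 1, 0; a₁, a₂, 1; 1, 0, a₃] y → y = x := by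
  change ∃ x, IsSymNash (A₆ a₁ a₂ a₃) x ∧ _ ∧ ∀ y, IsSymNash (A₆ a₁ a₂ a₃) y → y = x
  set w := A₆.equalizer a₁ a₂ a₃
  have hw := A₆.equalizer_pos h₁ h₂ h₃ hsum
  have hS : 0 < ∑ j, w j := Finset.sum_pos (fun j _ ↦ hw j) Finset.univ_nonempty
  refine ⟨(∑ j, w j)⁻¹ • w,
    isSymNash_inv_sum_smul (fun j ↦ (hw j).le) hS A₆.mulVec_equalizer,
    fun j ↦ mul_pos (inv_pos.2 hS) (hw j), fun y hy ↦ ?_⟩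
  have hpos : ∀ j, 0 < y j := hy.A₆_pos h₁.1 h₂.1.le h₃.2 hsum
  refine eq_inv_sum_smul_of_eq_smul hy.2.1 (A₆.eq_smul_equalizer ?_ ?_ (hw 2).ne')
  · simpa [A₆.mulVec_eq] using hy.mulVec_eq_mulVec_of_pos (hpos 0) (hpos 1)
  · simpa [A₆.mulVec_eq] using hy.mulVec_eq_mulVec_of_pos (hpos 0) (hpos 2)
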